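/- The direct limit of the system ℤ³ → ℤ³ → ⋯ with each map given by the matrix [[2,1,2],[2,3,0],[2,0,3]] is isomorphic to ℤ[1/5] ⊕ ℤ[1/3], with the two summands generated by the classes of the eigenvectors (1,1,1) (eigenvalue 5) and (0,2,−1) (eigenvalue 3). -/

import Mathlib

/-!
The rows `(2,1,2)` and `(0,1,-1)` are left eigenvectors of `M` for the eigenvalues `5` and `3`.
Hence `v ↦ ((2,1,2)·v / 5^(k+1), (0,1,-1)·v / 3^(k+1))` on the `k`-th copy of `ℤ³` is compatible
with `M` and induces a map from the direct limit to `ℚ²`; the shift `k + 1` makes it send the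
classes of `(1,1,1)` and `(0,2,-1)` at stage `k` to `(1/5^k, 0)` and `(0, 1/3^k)`. Both rows vanish
on `v` exactly when `M v = 0`, and such a `v` dies one step later, so the induced map is injective.
Its image is spanned by the images of the eigenvector classes, i.e. it is `ℤ[1/5] × ℤ[1/3]`.
-/

noncomputable section

/-- The subgroup `ℤ[1/p] ⊆ ℚ` of fractions with denominator a power of `p`. -/
def zOneDiv (p : ℕ) : AddSubgroup ℚ :=
  AddSubgroup.closure {q : ℚ | ∃ n : ℕ, q = 1 / (p : ℚ) ^ n}

/-- The matrix `[[2,1,2],[2,3,0],[2,0,3]]` as an endomorphism of `ℤ³`. -/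
def sigma : Module.End ℤ (Fin 3 → ℤ) := Matrix.toLin' !![2, 1, 2; 2, 3, 0; 2, 0, 3]

/-- The constant directed system `ℤ³ → ℤ³ → ⋯` with transition map `M`. -/
def fSys : ∀ i j : ℕ, i ≤ j → (Fin 3 → ℤ) →ₗ[ℤ] (Fin 3 → ℤ) :=
  fun i j _ => sigma ^ (j - i)

/-- The direct limit `lim→(ℤ³, M)`. -/
def L : Type := Module.DirectLimit (fun _ : ℕ => Fin 3 → ℤ) fSys

instance : AddCommGroup L := Module.DirectLimit.addCommGroup _ fSys

/-- The class in the direct limit of a vector at stage `k`. -/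
def ofL (k : ℕ) (v : Fin 3 → ℤ) : L :=
  Module.DirectLimit.of ℤ ℕ (fun _ : ℕ => Fin 3 → ℤ) fSys k v

/-- `1/5^k ∈ ℤ[1/5]`. -/
def fifthPow (k : ℕ) : ↥(zOneDiv 5) :=
  ⟨1 / (5 : ℚ) ^ k, AddSubgroup.subset_closure ⟨k, rfl⟩⟩

/-- `1/3^k ∈ ℤ[1/3]`. -/
def thirdPow (k : ℕ) : ↥(zOneDiv 3) :=
  ⟨1 / (3 : ℚ) ^ k, AddSubgroup.subset_closure ⟨k, rfl⟩⟩

section ConstantSystem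

variable {R G P : Type*} [Ring R] [AddCommGroup G] [Module R G] [AddCommGroup P] [Module R P]
  {f : Module.End R G} {g : ℕ → G →ₗ[R] P}

theorem Module.DirectLimit.pow_compatible (hg : ∀ k v, g (k + 1) (f v) = g k v)
    (i j : ℕ) (hij : i ≤ j) (v : G) : g j ((f ^ (j - i)) v) = g i v := by
  obtain ⟨n, rfl⟩ := Nat.exists_eq_add_of_le hij
  clear hij
  rw [Nat.add_sub_cancel_left]
  induction n with
  | zero => rfl
  | succ n ih => rw [pow_succ', Module.End.mul_apply, ← add_assoc, hg, ih]

theorem Module.DirectLimit.of_succ_apply (k : ℕ) (v : G) :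
    of R ℕ (fun _ ↦ G) (fun i j _ ↦ f ^ (j - i)) (k + 1) (f v) =
      of R ℕ (fun _ ↦ G) (fun i j _ ↦ f ^ (j - i)) k v := by
  simpa using of_f (G := fun _ ↦ G) (f := fun i j _ ↦ f ^ (j - i)) (hij := k.le_succ) (x := v)

theorem Module.DirectLimit.lift_pow_injective (hg : ∀ k v, g (k + 1) (f v) = g k v)
    (hker : ∀ k v, g k v = 0 → f v = 0) :
    Function.Injective (lift R ℕ (fun _ ↦ G) (fun i j _ ↦ f ^ (j - i)) g
      (pow_compatible hg)) := by
  refine (injective_iff_map_eq_zero _).2 fun x hx ↦ ?_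
  obtain ⟨k, v, rfl⟩ := exists_of x
  rw [lift_of] at hx
  rw [← of_succ_apply, hker k v hx, map_zero]

end ConstantSystem

theorem LinearMap.smulRight_one_div_pow_succ_apply {G : Type*} [AddCommGroup G]
    {f : Module.End ℤ G} {φ : G →ₗ[ℤ] ℤ} {c : ℚ} (hc : c ≠ 0)
    (hφ : ∀ v, (φ (f v) : ℚ) = c * φ v) (k : ℕ) (v : G) :
    φ.smulRight (1 / c ^ (k + 1)) (f v) = φ.smulRight (1 / c ^ k) v := by
  simp only [smulRight_apply, zsmul_eq_mul, hφ]
  field_simp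
  ring

open Matrix in
theorem Matrix.dotProduct_mulVec_of_vecMul_eq_smul {n R : Type*} [Fintype n] [CommSemiring R]
    {A : Matrix n n R} {w : n → R} {c : R} (h : w ᵥ* A = c • w) (v : n → R) :
    w ⬝ᵥ (A *ᵥ v) = c * (w ⬝ᵥ v) := by
  rw [dotProduct_mulVec, h, smul_dotProduct, smul_eq_mul]

theorem one_div_pow_mem_zOneDiv (p n : ℕ) : 1 / (p : ℚ) ^ n ∈ zOneDiv p :=
  AddSubgroup.subset_closure ⟨n, rfl⟩

theorem zOneDiv_le_iff {p : ℕ} {H : AddSubgroup ℚ} :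
    zOneDiv p ≤ H ↔ ∀ n : ℕ, 1 / (p : ℚ) ^ n ∈ H := by
  simp [zOneDiv, AddSubgroup.closure_le, Set.subset_def]

theorem sigma_apply (v : Fin 3 → ℤ) :
    sigma v = ![2 * v 0 + v 1 + 2 * v 2, 2 * v 0 + 3 * v 1, 2 * v 0 + 3 * v 2] := by
  simp [sigma, Matrix.toLin'_apply, dotProduct, Fin.sum_univ_three]

def coord5 : Module.Dual ℤ (Fin 3 → ℤ) := dotProductEquiv ℤ (Fin 3) ![2, 1, 2]

def coord3 : Module.Dual ℤ (Fin 3 → ℤ) := dotProductEquiv ℤ (Fin 3) ![0, 1, -1]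

theorem coord5_apply (v : Fin 3 → ℤ) : coord5 v = 2 * v 0 + v 1 + 2 * v 2 := by
  simp [coord5, dotProduct, Fin.sum_univ_three]

theorem coord3_apply (v : Fin 3 → ℤ) : coord3 v = v 1 - v 2 := by
  simp [coord3, dotProduct, Fin.sum_univ_three, sub_eq_add_neg]

theorem coord5_sigma (v : Fin 3 → ℤ) : coord5 (sigma v) = 5 * coord5 v :=
  Matrix.dotProduct_mulVec_of_vecMul_eq_smul (by decide) v

theorem coord3_sigma (v : Fin 3 → ℤ) : coord3 (sigma v) = 3 * coord3 v :=
  Matrix.dotProduct_mulVec_of_vecMul_eq_smul (by decide) v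

theorem sigma_eq_zero_of_coord_eq_zero {v : Fin 3 → ℤ} (h5 : coord5 v = 0) (h3 : coord3 v = 0) :
    sigma v = 0 := by
  rw [coord5_apply] at h5
  rw [coord3_apply] at h3
  ext i
  fin_cases i <;> simp [sigma_apply] <;> omega

def stage (k : ℕ) : (Fin 3 → ℤ) →ₗ[ℤ] ℚ × ℚ :=
  (coord5.smulRight (1 / (5 : ℚ) ^ (k + 1))).prod (coord3.smulRight (1 / (3 : ℚ) ^ (k + 1)))

theorem stage_apply (k : ℕ) (v : Fin 3 → ℤ) :
    stage k v = (coord5 v • (1 / (5 : ℚ) ^ (k + 1)), coord3 v • (1 / (3 : ℚ) ^ (k + 1))) :=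
  rfl

theorem stage_succ_sigma (k : ℕ) (v : Fin 3 → ℤ) : stage (k + 1) (sigma v) = stage k v := by
  simp only [stage, LinearMap.coe_prod, Function.prod_apply]
  rw [LinearMap.smulRight_one_div_pow_succ_apply (by norm_num) (by simp [coord5_sigma]),
    LinearMap.smulRight_one_div_pow_succ_apply (by norm_num) (by simp [coord3_sigma])]

theorem sigma_eq_zero_of_stage_eq_zero {k : ℕ} {v : Fin 3 → ℤ} (h : stage k v = 0) :
    sigma v = 0 := by
  rw [stage_apply, Prod.mk_eq_zero, smul_eq_zero, smul_eq_zero] at h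
  exact sigma_eq_zero_of_coord_eq_zero (h.1.resolve_right (by positivity))
    (h.2.resolve_right (by positivity))

def toProd : L →ₗ[ℤ] ℚ × ℚ :=
  Module.DirectLimit.lift ℤ ℕ _ fSys stage
    (Module.DirectLimit.pow_compatible stage_succ_sigma)

theorem toProd_ofL (k : ℕ) (v : Fin 3 → ℤ) : toProd (ofL k v) = stage k v :=
  Module.DirectLimit.lift_of (f := fSys) _ _ _

theorem toProd_injective : Function.Injective toProd :=
  Module.DirectLimit.lift_pow_injective stage_succ_sigma
    fun _ _ ↦ sigma_eq_zero_of_stage_eq_zero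

theorem toProd_ofL_eigen5 (k : ℕ) : toProd (ofL k ![1, 1, 1]) = (1 / 5 ^ k, 0) := by
  simp [toProd_ofL, stage_apply, coord5_apply, coord3_apply, pow_succ]

theorem toProd_ofL_eigen3 (k : ℕ) : toProd (ofL k ![0, 2, -1]) = (0, 1 / 3 ^ k) := by
  simp [toProd_ofL, stage_apply, coord5_apply, coord3_apply, pow_succ]

theorem range_toProd :
    toProd.toAddMonoidHom.range = (zOneDiv 5).prod (zOneDiv 3) := by
  apply le_antisymm
  · rintro _ ⟨x, rfl⟩
    obtain ⟨k, v, rfl⟩ := Module.DirectLimit.exists_of x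
    change toProd (ofL k v) ∈ _
    rw [toProd_ofL, stage_apply]
    exact ⟨AddSubgroup.zsmul_mem _ (one_div_pow_mem_zOneDiv 5 _) _,
      AddSubgroup.zsmul_mem _ (one_div_pow_mem_zOneDiv 3 _) _⟩
  · have h5 : zOneDiv 5 ≤ toProd.toAddMonoidHom.range.comap (AddMonoidHom.inl ℚ ℚ) :=
      zOneDiv_le_iff.2 fun n ↦ ⟨ofL n ![1, 1, 1], toProd_ofL_eigen5 n⟩
    have h3 : zOneDiv 3 ≤ toProd.toAddMonoidHom.range.comap (AddMonoidHom.inr ℚ ℚ) :=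
      zOneDiv_le_iff.2 fun n ↦ ⟨ofL n ![0, 2, -1], toProd_ofL_eigen3 n⟩
    rintro ⟨a, b⟩ ⟨ha, hb⟩
    rw [← Prod.fst_add_snd (a, b)]
    exact add_mem (h5 ha) (h3 hb)

/-- The direct limit of `ℤ³ → ℤ³ → ⋯` along `[[2,1,2],[2,3,0],[2,0,3]]` is isomorphic to
`ℤ[1/5] ⊕ ℤ[1/3]`, with the summands generated by the classes of the eigenvectors
`(1,1,1)` (eigenvalue 5) and `(0,2,−1)` (eigenvalue 3). -/
theorem stmt6 :
    ∃ e : L ≃+ ↥(zOneDiv 5) × ↥(zOneDiv 3),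
      ∀ k : ℕ,
        e (ofL k ![1, 1, 1]) = (fifthPow k, 0) ∧
        e (ofL k ![0, 2, -1]) = (0, thirdPow k) := by
  refine ⟨(AddMonoidHom.ofInjective (f := toProd.toAddMonoidHom) toProd_injective).trans
    ((AddEquiv.addSubgroupCongr range_toProd).trans (AddSubgroup.prodEquiv _ _)),
    fun k ↦ ⟨?_, ?_⟩⟩
  · have h := toProd_ofL_eigen5 k
    exact Prod.ext (Subtype.ext (congrArg Prod.fst h)) (Subtype.ext (congrArg Prod.snd h))
  · have h := toProd_ofL_eigen3 k
    exact Prod.ext (Subtype.ext (congrArg Prod.fst h)) (Subtype.ext (congrArg Prod.snd h))
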